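/- Let M ≥ 1 and let λ = (λ_i)_{i≥1} be the generalized Thue–Morse sequence associated with M. Then for every n ≥ 0 and every 0 ≤ i < 2^n one has \overline{λ_1…λ_{2^n−i}} ≺ λ_{i+1}…λ_{2^n} ≼ λ_1…λ_{2^n−i} (lexicographic comparison of words of length 2^n − i). -/
import Mathlib


namespace Paper

/-- A digit sequence over the alphabet `{0,…,M}` (0-indexed: `x 0` is the digit `x_1`). -/
def IsSeq (M : ℕ) (x : ℕ → ℕ) : Prop := ∀ i, x i ≤ M

/-- The `n`-fold left shift `σ^n`. -/
def shiftn (n : ℕ) (x : ℕ → ℕ) : ℕ → ℕ := fun i => x (i + n)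

/-- Reflection of a sequence: `x̄ = (M - x_i)_i`. -/
def reflectSeq (M : ℕ) (x : ℕ → ℕ) : ℕ → ℕ := fun i => M - x i

/-- Strict lexicographic order on sequences. -/
def SeqLt (x y : ℕ → ℕ) : Prop := ∃ n, (∀ i < n, x i = y i) ∧ x n < y n

/-- Lexicographic order on sequences. -/
def SeqLe (x y : ℕ → ℕ) : Prop := SeqLt x y ∨ x = y

/-- Reflection of a word. -/
def reflectWord (M : ℕ) (w : List ℕ) : List ℕ := w.map (fun d => M - d)

/-- `w⁻`: decrement the last letter of a word. -/
def wordMinus (w : List ℕ) : List ℕ := w.dropLast ++ [w.getLastD 0 - 1]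

/-- `w⁺`: increment the last letter of a word. -/
def wordPlus (w : List ℕ) : List ℕ := w.dropLast ++ [w.getLastD 0 + 1]

/-- The periodic sequence `w^∞`. -/
def per (w : List ℕ) : ℕ → ℕ := fun i => w.getD (i % w.length) 0

/-- The sequence starting with the word `w` followed by the sequence `x`. -/
def wordThen (w : List ℕ) (x : ℕ → ℕ) : ℕ → ℕ :=
  fun i => if i < w.length then w.getD i 0 else x (i - w.length)

/-- The factor `x_{i+1} … x_{i+n}` of a sequence (0-indexed start `i`, length `n`). -/
def factor (x : ℕ → ℕ) (i n : ℕ) : List ℕ := (List.range n).map (fun j => x (i + j))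

/-- The prefix `x_1 … x_n` of a sequence. -/
def pre (x : ℕ → ℕ) (n : ℕ) : List ℕ := factor x 0 n

/-- The set `𝐕` of sequences `a` with `ā ≼ σⁿ(a) ≼ a` for all `n ≥ 0`. -/
def Vset (M : ℕ) : Set (ℕ → ℕ) :=
  {a | IsSeq M a ∧ ∀ n, SeqLe (reflectSeq M a) (shiftn n a) ∧ SeqLe (shiftn n a) a}

/-- The subshift `V_α` of sequences `x` with `ᾱ ≼ σⁿ(x) ≼ α` for all `n ≥ 0`. -/
def Vsub (M : ℕ) (α : ℕ → ℕ) : Set (ℕ → ℕ) :=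
  {x | IsSeq M x ∧ ∀ n, SeqLe (reflectSeq M α) (shiftn n x) ∧ SeqLe (shiftn n x) α}

/-- `B_n(X)`: the words of length `n` occurring as factors of elements of `X`. -/
def Bn (n : ℕ) (X : Set (ℕ → ℕ)) : Set (List ℕ) :=
  {w | w.length = n ∧ ∃ x ∈ X, ∃ i, w = factor x i n}

/-- The language of `X`: all factors of elements of `X`. -/
def Lang (X : Set (ℕ → ℕ)) : Set (List ℕ) :=
  {w | ∃ x ∈ X, ∃ i, w = factor x i w.length}

/-- Topological transitivity: any two nonempty factors can be connected within the language. -/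
def TopTransitive (X : Set (ℕ → ℕ)) : Prop :=
  ∀ u v, u ∈ Lang X → v ∈ Lang X → u ≠ [] → v ≠ [] → ∃ w, (u ++ w ++ v) ∈ Lang X

/-- Strict lexicographic order on words (intended for words of equal length). -/
def WordLt (u v : List ℕ) : Prop := List.Lex (· < ·) u v

/-- Lexicographic order on words (intended for words of equal length). -/
def WordLe (u v : List ℕ) : Prop := WordLt u v ∨ u = v

/-- Irreducible sequence: `a ∈ 𝐕` and `a_1…a_j (\overline{a_1…a_j}⁺)^∞ ≺ a` for every `j ≥ 1`
with `a_j ≥ 1` such that `(a_1…a_j⁻)^∞ ∈ 𝐕`. -/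
def IrrSeq (M : ℕ) (a : ℕ → ℕ) : Prop :=
  a ∈ Vset M ∧ ∀ j, 1 ≤ j → 1 ≤ a (j - 1) → per (wordMinus (pre a j)) ∈ Vset M →
    SeqLt (wordThen (pre a j) (per (wordPlus (reflectWord M (pre a j))))) a

/-- The Thue–Morse sequence: `tau i` is the parity of the number of `1`s in the binary
expansion of `i`. -/
def tau (i : ℕ) : ℕ := (Nat.digits 2 i).sum % 2

/-- The generalized Thue–Morse sequence `λ` (0-indexed: `lam M i = λ_{i+1}`);
`λ_i = k + τ_i - τ_{i-1}` if `M = 2k`, and `λ_i = k + τ_i` if `M = 2k+1`. -/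
def lam (M : ℕ) (i : ℕ) : ℕ :=
  if M % 2 = 0 then (M / 2 + tau (i + 1)) - tau i else M / 2 + tau (i + 1)

/-- The word `λ_1 … λ_L`. -/
def lamWord (M L : ℕ) : List ℕ := (List.range L).map (lam M)

/-- `2^(n-1)` if `M` is even, `2^n` if `M` is odd. -/
def xiLen (M n : ℕ) : ℕ := if M % 2 = 0 then 2 ^ (n - 1) else 2 ^ n

/-- The sequence `ξ(n)`. -/
def xi (M n : ℕ) : ℕ → ℕ :=
  wordThen (lamWord M (xiLen M n)) (per (wordPlus (reflectWord M (lamWord M (xiLen M n)))))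

/-- `2^n` if `M` is even, `2^(n+1)` if `M` is odd. -/
def starThreshold (M n : ℕ) : ℕ := if M % 2 = 0 then 2 ^ n else 2 ^ (n + 1)

/-- `*`-irreducible sequence. -/
def StarIrrSeq (M : ℕ) (a : ℕ → ℕ) : Prop :=
  a ∈ Vset M ∧ ∃ n, 1 ≤ n ∧ SeqLe (xi M (n + 1)) a ∧ SeqLt a (xi M n) ∧
    ∀ j, 1 ≤ a (j - 1) → per (wordMinus (pre a j)) ∈ Vset M → starThreshold M n < j →
      SeqLt (wordThen (pre a j) (per (wordPlus (reflectWord M (pre a j))))) a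

/-- The projection `π_q(x) = ∑_{i ≥ 1} x_i q^{-i}`. -/
noncomputable def piBase (q : ℝ) (x : ℕ → ℕ) : ℝ := ∑' i : ℕ, (x i : ℝ) / q ^ (i + 1)

/-- The set `𝐔_q` of sequences that are the unique expansion of their projection. -/
def Uset (M : ℕ) (q : ℝ) : Set (ℕ → ℕ) :=
  {a | IsSeq M a ∧ ∀ b, IsSeq M b → piBase q b = piBase q a → b = a}

/-- The entropy function `H(q) = limsup_n (log #B_n(𝐔_q))/n`. -/
noncomputable def entropy (M : ℕ) (q : ℝ) : ℝ :=
  Filter.limsup (fun n : ℕ => Real.log ((Bn n (Uset M q)).ncard) / (n : ℝ)) Filter.atTop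

/-- `α` is the quasi-greedy expansion of `1` in base `q`. -/
def QuasiGreedy (M : ℕ) (q : ℝ) (α : ℕ → ℕ) : Prop :=
  IsSeq M α ∧ piBase q α = 1 ∧ {n | α n ≠ 0}.Infinite ∧
    ∀ n, 1 ≤ n → α (n - 1) < M → SeqLe (shiftn n α) α

/-- The univoque set `𝒰_q ⊆ ℝ`. -/
def univoqueSet (M : ℕ) (q : ℝ) : Set ℝ :=
  {x | ∃! a : ℕ → ℕ, IsSeq M a ∧ piBase q a = x}

/-- The bifurcation set `E` of the entropy function. -/
def Eset (M : ℕ) : Set ℝ :=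
  {q | q ∈ Set.Ioc 1 (M + 1 : ℝ) ∧ ∀ ε : ℝ, 0 < ε →
    ∃ p ∈ Set.Ioo (q - ε) (q + ε) ∩ Set.Ioc 1 (M + 1 : ℝ), entropy M p ≠ entropy M q}

/-- `[pL, pR]` is an irreducible interval. -/
def IrrInterval (M : ℕ) (pL pR : ℝ) : Prop :=
  ∃ a : List ℕ, a ≠ [] ∧ (∀ d ∈ a, d ≤ M) ∧ a.getLastD 0 < M ∧
    IrrSeq M (per a) ∧ piBase pL (per a) = 1 ∧
    piBase pR (wordThen (wordPlus a) (per (reflectWord M a))) = 1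

/-- `[pL, pR]` is a `*`-irreducible interval. -/
def StarIrrInterval (M : ℕ) (pL pR : ℝ) : Prop :=
  ∃ a : List ℕ, a ≠ [] ∧ (∀ d ∈ a, d ≤ M) ∧ a.getLastD 0 < M ∧
    StarIrrSeq M (per a) ∧ piBase pL (per a) = 1 ∧
    piBase pR (wordThen (wordPlus a) (per (reflectWord M a))) = 1

/-- Primitive words. -/
def PrimitiveWord (M : ℕ) (a : List ℕ) : Prop :=
  (∀ d ∈ a, d ≤ M) ∧ ∀ i < a.length,
    WordLt (reflectWord M (a.take (a.length - i))) (a.drop i) ∧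
      WordLe (a.drop i) (a.take (a.length - i))

/-- The defining property of the reflection recurrence word:
`a_{s+1}…a_m⁻ = \overline{a_1…a_{m-s}}` with `s < m`. -/
def RRpred (M : ℕ) (a : List ℕ) (s : ℕ) : Prop :=
  s < a.length ∧ wordMinus (a.drop s) = reflectWord M (a.take (a.length - s))

instance (M : ℕ) (a : List ℕ) : DecidablePred (RRpred M a) := fun s =>
  inferInstanceAs (Decidable (s < a.length ∧
    wordMinus (a.drop s) = reflectWord M (a.take (a.length - s))))

/-- The reflection recurrence word `R(a)` of a (primitive) word `a`. -/
noncomputable def RR (M : ℕ) (a : List ℕ) : List ℕ :=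
  letI : Decidable (∃ s, RRpred M a s) := Classical.dec _
  if h : ∃ s, RRpred M a s then a.take (Nat.find h) else a

/-- Iterates `R^j(a)` of the reflection recurrence word. -/
noncomputable def RRiter (M : ℕ) (a : List ℕ) : ℕ → List ℕ
  | 0 => a
  | j + 1 => RR M (RRiter M a j)

/-- The set `𝐈_N`. -/
def INset (M N : ℕ) : Set (ℕ → ℕ) :=
  {a | IsSeq M a ∧ pre a (2 * N) = List.replicate (2 * N - 1) M ++ [0] ∧
    ∀ s, 2 ≤ s → WordLt (List.replicate N 0) (factor a (s * N) N) ∧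
      WordLt (factor a (s * N) N) (List.replicate N M)}

/-- The sequence `γ = k^∞` (`M = 2k`) or `((k+1)k)^∞` (`M = 2k+1`), the quasi-greedy expansion
of `1` in the generalized golden ratio base. -/
def gammaG (M : ℕ) : ℕ → ℕ :=
  if M % 2 = 0 then per [M / 2] else per [M / 2 + 1, M / 2]

/-- The sequence `g = ((k+1)(k-1))^∞` (`M = 2k`) or `((k+1)(k+1)kk)^∞` (`M = 2k+1`), the
quasi-greedy expansion of `1` in base `q_{NT}`. -/
def gNT (M : ℕ) : ℕ → ℕ :=
  if M % 2 = 0 then per [M / 2 + 1, M / 2 - 1]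
  else per [M / 2 + 1, M / 2 + 1, M / 2, M / 2]

/-! ### Auxiliary lemmas for Statement 13 -/

lemma tau_le_one (i : ℕ) : tau i ≤ 1 := Nat.le_of_lt_succ (Nat.mod_lt _ (by norm_num))

lemma tau_zero : tau 0 = 0 := by simp [tau]

lemma tau_two_mul (i : ℕ) : tau (2 * i) = tau i := by
  rcases Nat.eq_zero_or_pos i with rfl | hi
  · rfl
  · unfold tau
    rw [Nat.digits_def' (by norm_num : 1 < 2) (by omega)]
    simp [Nat.mul_div_cancel_left _ (by norm_num : 0 < 2), Nat.mul_mod_right]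

lemma tau_two_mul_add_one (i : ℕ) : tau (2 * i + 1) = 1 - tau i := by
  unfold tau
  rw [Nat.digits_def' (by norm_num : 1 < 2) (by omega)]
  have h1 : (2 * i + 1) % 2 = 1 := by omega
  have h2 : (2 * i + 1) / 2 = i := by omega
  rw [h1, h2, List.sum_cons]
  omega

lemma tau_one : tau 1 = 1 := by
  rw [show (1 : ℕ) = 2 * 0 + 1 from rfl, tau_two_mul_add_one, tau_zero]

lemma tau_pow (n : ℕ) : tau (2 ^ n) = 1 := by
  induction n with
  | zero => exact tau_one
  | succ n ih => rw [pow_succ, mul_comm, tau_two_mul]; exact ih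

lemma tau_pow_add (n : ℕ) : ∀ j < 2 ^ n, tau (2 ^ n + j) = 1 - tau j := by
  induction n with
  | zero =>
    intro j hj
    interval_cases j
    rw [tau_zero]
    exact tau_one
  | succ n ih =>
    intro j hj
    rcases Nat.even_or_odd j with ⟨m, hm⟩ | ⟨m, hm⟩
    · have hm' : m < 2 ^ n := by
        have := hj; rw [pow_succ] at this; omega
      have h1 : 2 ^ (n + 1) + j = 2 * (2 ^ n + m) := by rw [pow_succ]; omega
      rw [h1, tau_two_mul, ih m hm', hm, ← two_mul, tau_two_mul]
    · have hm' : m < 2 ^ n := by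
        have := hj; rw [pow_succ] at this; omega
      have h1 : 2 ^ (n + 1) + j = 2 * (2 ^ n + m) + 1 := by rw [pow_succ]; omega
      have h2 := tau_le_one m
      rw [h1, tau_two_mul_add_one, ih m hm', hm, tau_two_mul_add_one]

lemma lam_zero (M : ℕ) : lam M 0 = M / 2 + 1 := by
  have h1 : tau 1 = 1 := tau_one
  unfold lam
  rw [h1, tau_zero]
  split <;> omega

lemma lam_le (M : ℕ) (hM : 1 ≤ M) (j : ℕ) : lam M j ≤ M := by
  have h1 := tau_le_one j
  have h2 := tau_le_one (j + 1)
  unfold lam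
  split <;> omega

lemma lam_rec (M : ℕ) (hM : 1 ≤ M) (n j : ℕ) (hj : j < 2 ^ n) :
    lam M (2 ^ n + j) = (M - lam M j) + (if j = 2 ^ n - 1 then 1 else 0) := by
  have hL : 1 ≤ 2 ^ n := Nat.one_le_two_pow
  have ht1 := tau_le_one j
  have ht2 := tau_le_one (j + 1)
  have h1 : tau (2 ^ n + j) = 1 - tau j := tau_pow_add n j hj
  by_cases hj1 : j + 1 < 2 ^ n
  · have h2 : tau (2 ^ n + j + 1) = 1 - tau (j + 1) := by
      rw [show 2 ^ n + j + 1 = 2 ^ n + (j + 1) by omega]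
      exact tau_pow_add n (j + 1) hj1
    have h3 : ¬ (j = 2 ^ n - 1) := by omega
    unfold lam
    rw [h1, h2, if_neg h3]
    split <;> omega
  · have hje : j = 2 ^ n - 1 := by omega
    have h2 : tau (2 ^ n + j + 1) = 1 := by
      rw [show 2 ^ n + j + 1 = 2 ^ (n + 1) by rw [pow_succ]; omega]
      exact tau_pow (n + 1)
    have h4 : tau (j + 1) = 1 := by
      rw [show j + 1 = 2 ^ n by omega]; exact tau_pow n
    unfold lam
    rw [h1, h2, h4, if_pos hje]
    split <;> omega

/-- The key index-level lemma: for all `n` and `i < 2^n`, the reflected prefix is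
strictly lexicographically below the shift, which is at most the prefix. -/
lemma lam_key (M : ℕ) (hM : 1 ≤ M) : ∀ n, ∀ i < 2 ^ n,
    (∃ m < 2 ^ n - i, (∀ j < m, M - lam M j = lam M (i + j)) ∧
      M - lam M m < lam M (i + m)) ∧
    ((∃ m < 2 ^ n - i, (∀ j < m, lam M (i + j) = lam M j) ∧ lam M (i + m) < lam M m) ∨
      ∀ j < 2 ^ n - i, lam M (i + j) = lam M j) := by
  intro n
  induction n with
  | zero =>
    intro i hi
    have hi0 : i = 0 := by omega
    subst hi0
    constructor
    · refine ⟨0, by norm_num, fun j hj => by omega, ?_⟩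
      have := lam_zero M
      simp only [Nat.add_zero] at *
      omega
    · exact Or.inr (fun j hj => by simp)
  | succ n IH =>
    intro i hi
    obtain ⟨L, hLdef⟩ : ∃ L, L = 2 ^ n := ⟨_, rfl⟩
    have hL1 : 1 ≤ L := hLdef ▸ Nat.one_le_two_pow
    have hLL : 2 ^ (n + 1) = 2 * L := by rw [hLdef, pow_succ]; ring
    have hrec : ∀ j < L, lam M (L + j) = (M - lam M j) + (if j = L - 1 then 1 else 0) := by
      rw [hLdef]; exact fun j hj => lam_rec M hM n j hj
    have hle : ∀ j, lam M j ≤ M := lam_le M hM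
    have IH' : ∀ q, q < L →
        (∃ m < L - q, (∀ j < m, M - lam M j = lam M (q + j)) ∧
          M - lam M m < lam M (q + m)) ∧
        ((∃ m < L - q, (∀ j < m, lam M (q + j) = lam M j) ∧ lam M (q + m) < lam M m) ∨
          ∀ j < L - q, lam M (q + j) = lam M j) := by
      rw [hLdef]; exact IH
    clear IH hLdef
    rcases Nat.lt_trichotomy i L with hiL | hiL | hiL
    · -- case i < L
      obtain ⟨⟨mA, hmA, prefA, ltA⟩, hB⟩ := IH' i hiL
      constructor
      · exact ⟨mA, by omega, prefA, ltA⟩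
      · rcases hB with ⟨mB, hmB, prefB, ltB⟩ | heq
        · exact Or.inl ⟨mB, by omega, prefB, ltB⟩
        · rcases Nat.eq_zero_or_pos i with rfl | hi1
          · exact Or.inr (fun j hj => by simp)
          · -- use A (L - i)
            obtain ⟨m, hm, pref, hlt⟩ := (IH' (L - i) (by omega)).1
            have hm' : m < i := by omega
            refine Or.inl ⟨(L - i) + m, by omega, ?_, ?_⟩
            · intro j hj
              rcases Nat.lt_or_ge j (L - i) with h | h
              · exact heq j (by omega)
              · have hj' : j - (L - i) < m := by omega
                have e1 : i + j = L + (j - (L - i)) := by omega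
                have e2 : j - (L - i) ≠ L - 1 := by omega
                rw [e1, hrec _ (by omega), if_neg e2]
                have := pref _ hj'
                rw [show L - i + (j - (L - i)) = j by omega] at this
                omega
            · have e1 : i + (L - i + m) = L + m := by omega
              have e2 : m ≠ L - 1 := by omega
              rw [e1, hrec m (by omega), if_neg e2]
              have h1 := hlt
              have h2 := hle m
              omega
    · -- case i = L
      subst hiL
      constructor
      · refine ⟨i - 1, by omega, ?_, ?_⟩
        · intro j hj
          rw [hrec j (by omega), if_neg (by omega)]
          omega
        · rw [hrec (i - 1) (by omega), if_pos rfl]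
          have := hle (i - 1)
          omega
      · rcases Nat.lt_or_ge 1 i with h2 | h2
        · refine Or.inl ⟨0, by omega, fun j hj => by omega, ?_⟩
          rw [hrec 0 (by omega), if_neg (by omega), lam_zero M]
          omega
        · -- i = 1
          have hv : lam M (i + 0) = (M - lam M 0) + 1 := by
            rw [hrec 0 (by omega), if_pos (by omega)]
          rcases Nat.lt_or_ge (lam M (i + 0)) (lam M 0) with h | h
          · exact Or.inl ⟨0, by omega, fun j hj => by omega, h⟩
          · refine Or.inr ?_
            intro j hj
            have hj0 : j = 0 := by omega
            subst hj0
            have := lam_zero M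
            omega
    · -- case L < i < 2L
      have hp1 : 1 ≤ i - L := by omega
      have hpL : i - L < L := by omega
      obtain ⟨p, hpdef⟩ : ∃ p, p = i - L := ⟨_, rfl⟩
      have hiLp : i = L + p := by omega
      obtain ⟨⟨mA, hmA, prefA, ltA⟩, hB⟩ := IH' p (by omega)
      have hlen : 2 ^ (n + 1) - i = L - p := by omega
      rw [hlen]
      have hshift : ∀ j < L - p, lam M (i + j) =
          (M - lam M (p + j)) + (if p + j = L - 1 then 1 else 0) := by
        intro j hj
        rw [show i + j = L + (p + j) by omega]
        exact hrec (p + j) (by omega)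
      constructor
      · -- A' from B(p)
        rcases hB with ⟨mB, hmB, prefB, ltB⟩ | heq
        · refine ⟨mB, hmB, ?_, ?_⟩
          · intro j hj
            rw [hshift j (by omega), if_neg (by omega), prefB j hj]
            omega
          · rw [hshift mB hmB]
            have h1 := hle mB
            have h2 := hle (p + mB)
            split <;> omega
        · refine ⟨L - p - 1, by omega, ?_, ?_⟩
          · intro j hj
            rw [hshift j (by omega), if_neg (by omega), heq j (by omega)]
            omega
          · rw [hshift (L - p - 1) (by omega), if_pos (by omega),
              heq (L - p - 1) (by omega)]
            have := hle (L - p - 1)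
            omega
      · -- B' from A(p)
        have hpref : ∀ j < mA, lam M (i + j) = lam M j := by
          intro j hj
          rw [hshift j (by omega), if_neg (by omega), ← prefA j hj]
          have := hle j
          omega
        by_cases hlast : p + mA = L - 1
        · have hv : lam M (i + mA) = (M - lam M (p + mA)) + 1 := by
            rw [hshift mA (by omega), if_pos hlast]
          rcases Nat.lt_or_ge (lam M (i + mA)) (lam M mA) with h | h
          · exact Or.inl ⟨mA, hmA, hpref, h⟩
          · refine Or.inr ?_
            intro j hj
            rcases Nat.lt_or_ge j mA with h' | h'
            · exact hpref j h'
            · have hj' : j = mA := by omega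
              subst hj'
              have h1 := hle j
              have h2 := hle (p + j)
              omega
        · refine Or.inl ⟨mA, hmA, hpref, ?_⟩
          rw [hshift mA (by omega), if_neg hlast]
          have h1 := hle mA
          have h2 := hle (p + mA)
          omega

lemma lex_cons_iff' {a b : ℕ} {u v : List ℕ} :
    List.Lex (· < ·) (a :: u) (b :: v) ↔ a < b ∨ (a = b ∧ List.Lex (· < ·) u v) := by
  constructor
  · intro h
    cases h with
    | rel h => exact Or.inl h
    | cons h => exact Or.inr ⟨rfl, h⟩
  · rintro (h | ⟨rfl, h⟩)
    · exact List.Lex.rel h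
    · exact List.Lex.cons h

lemma wordLt_map_range (f g : ℕ → ℕ) (L : ℕ) :
    WordLt ((List.range L).map f) ((List.range L).map g) ↔
      ∃ m < L, (∀ j < m, f j = g j) ∧ f m < g m := by
  induction L generalizing f g with
  | zero => simp [WordLt]
  | succ L ih =>
    rw [List.range_succ_eq_map]
    simp only [List.map_cons, List.map_map]
    unfold WordLt
    rw [lex_cons_iff']
    constructor
    · rintro (h | ⟨hfg, h⟩)
      · exact ⟨0, by omega, fun j hj => by omega, h⟩
      · obtain ⟨m, hm, pref, hlt⟩ := (ih _ _).mp h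
        refine ⟨m + 1, by omega, ?_, hlt⟩
        intro j hj
        rcases Nat.eq_zero_or_pos j with rfl | hj0
        · exact hfg
        · have h1 := pref (j - 1) (by omega)
          simp only [Function.comp] at h1
          rwa [show (j - 1).succ = j by omega] at h1
    · rintro ⟨m, hm, pref, hlt⟩
      rcases Nat.eq_zero_or_pos m with rfl | hm0
      · exact Or.inl hlt
      · refine Or.inr ⟨pref 0 hm0, (ih _ _).mpr ⟨m - 1, by omega, ?_, ?_⟩⟩
        · intro j hj
          have h1 := pref (j + 1) (by omega)
          simpa [Function.comp] using h1
        · show f (m - 1 + 1) < g (m - 1 + 1)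
          rwa [show m - 1 + 1 = m by omega]

lemma map_range_eq_iff (f g : ℕ → ℕ) (L : ℕ) :
    (List.range L).map f = (List.range L).map g ↔ ∀ j < L, f j = g j := by
  rw [List.map_eq_map_iff]
  constructor
  · intro h j hj
    exact h j (List.mem_range.mpr hj)
  · intro h x hx
    exact h x (List.mem_range.mp hx)

lemma lamWord_drop (M n i : ℕ) (hi : i ≤ 2 ^ n) :
    (lamWord M (2 ^ n)).drop i = (List.range (2 ^ n - i)).map (fun j => lam M (i + j)) := by
  unfold lamWord
  rw [show 2 ^ n = i + (2 ^ n - i) by omega, List.range_add, List.map_append,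
    List.drop_append_of_le_length (by simp), List.map_map,
    List.drop_eq_nil_of_le (by simp), List.nil_append,
    show i + (2 ^ n - i) - i = 2 ^ n - i by omega]
  rfl

/-- For all `n ≥ 0` and `0 ≤ i < 2^n`,
`\overline{λ_1…λ_{2^n-i}} ≺ λ_{i+1}…λ_{2^n} ≼ λ_1…λ_{2^n-i}`. -/
theorem statement13 (M : ℕ) (hM : 1 ≤ M) (n : ℕ) (i : ℕ) (hi : i < 2 ^ n) :
    WordLt (reflectWord M (lamWord M (2 ^ n - i))) ((lamWord M (2 ^ n)).drop i) ∧
      WordLe ((lamWord M (2 ^ n)).drop i) (lamWord M (2 ^ n - i)) := by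
  obtain ⟨hA, hB⟩ := lam_key M hM n i hi
  have hdrop := lamWord_drop M n i (le_of_lt hi)
  have hrefl : reflectWord M (lamWord M (2 ^ n - i)) =
      (List.range (2 ^ n - i)).map (fun j => M - lam M j) := by
    unfold reflectWord lamWord
    rw [List.map_map]
    rfl
  have hword : lamWord M (2 ^ n - i) = (List.range (2 ^ n - i)).map (lam M) := rfl
  constructor
  · rw [hrefl, hdrop, wordLt_map_range]
    exact hA
  · rw [hdrop, hword]
    rcases hB with h | h
    · exact Or.inl ((wordLt_map_range _ _ _).mpr h)
    · exact Or.inr ((map_range_eq_iff _ _ _).mpr h)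

end Paper
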